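/- arXiv:1909.12751 — 2 statements merged into one kernel-verified Lean document; each statement's English description precedes it below -/
import Mathlib

section
/- Let f : S → ℍ be smooth. Then f is a CRF function if and only if f_{(q̄₁)} ≡ 0 and f_{(q̄₂)} ≡ 0 on S. -/
/-!
Since `f_{(q̄ₖ)} = ∂F/∂q̄ₖ − νₖ ⟨ν, 𝔇̄F⟩`, the pair `(f_{(q̄₁)}, f_{(q̄₂)})` is the part of `𝔇̄F`
orthogonal to the right `ℍ`-line `ν ℍ`, so it vanishes at `p` exactly when `𝔇̄F(p) = ∇ρ(p) λ` for
some `λ ∈ ℍ`. Two extensions of `f` differ by a function vanishing on `S`; by the implicit function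
theorem its differential at `p ∈ S` is `dρ(p) ⊗ λ`, so its `𝔇̄` is `∇ρ(p) λ`. Hence one CRF
extension forces the vanishing for every extension. Conversely, if `𝔇̄F = ∇ρ g₀` on `S` with
`g₀ = |∇ρ|⁻² ⟨∇ρ, 𝔇̄F⟩`, then `F − ρ g₀` is an extension of `f` with `𝔇̄ = 0` on `S`.
-/

noncomputable section

open Set

/-- The quaternions. -/
local notation "ℍ" => Quaternion ℝ

/-- `ℍ²`. -/
abbrev E : Type := ℍ × ℍ

/-- The real basis `1, i, j, k` of `ℍ`. -/
def e : Fin 4 → ℍ := ![1, ⟨0,1,0,0⟩, ⟨0,0,1,0⟩, ⟨0,0,0,1⟩]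

/-- The coordinate directions of the first quaternionic variable. -/
def e1 (α : Fin 4) : E := (e α, 0)

/-- The coordinate directions of the second quaternionic variable. -/
def e2 (α : Fin 4) : E := (0, e α)

/-- The Euclidean scalar product of `ℍ ≅ ℝ⁴`. -/
def qdot (p q : ℍ) : ℝ := (star p * q).re

/-- The Euclidean scalar product of `ℍ² ≅ ℝ⁸`. -/
def edot (p q : E) : ℝ := qdot p.1 q.1 + qdot p.2 q.2

/-- The quaternionic scalar product `⟨p,r⟩ = p̄₁r₁ + p̄₂r₂` on `ℍ²`. -/
def qinner (p r : E) : ℍ := star p.1 * r.1 + star p.2 * r.2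

/-- `∂F/∂q̄₁ = Σ_α i_α ∂F/∂x_α`. -/
def dbar1 (F : E → ℍ) : E → ℍ := fun p => ∑ α, e α * fderiv ℝ F p (e1 α)

/-- `∂F/∂q̄₂ = Σ_α i_α ∂F/∂y_α`. -/
def dbar2 (F : E → ℍ) : E → ℍ := fun p => ∑ α, e α * fderiv ℝ F p (e2 α)

/-- `∂F/∂q₁ = Σ_α ī_α ∂F/∂x_α`. -/
def d1 (F : E → ℍ) : E → ℍ := fun p => ∑ α, star (e α) * fderiv ℝ F p (e1 α)

/-- `∂F/∂q₂ = Σ_α ī_α ∂F/∂y_α`. -/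
def d2 (F : E → ℍ) : E → ℍ := fun p => ∑ α, star (e α) * fderiv ℝ F p (e2 α)

/-- The Cauchy–Riemann–Fueter operator `𝔇̄F = (∂F/∂q̄₁, ∂F/∂q̄₂)`. -/
def Dbar (F : E → ℍ) : E → E := fun p => (dbar1 F p, dbar2 F p)

/-- `Δ₁`, the Laplacian in the variables `x₀,…,x₃`. -/
def lap1 (F : E → ℍ) : E → ℍ :=
  fun p => ∑ α, fderiv ℝ (fun x => fderiv ℝ F x (e1 α)) p (e1 α)

/-- `Δ₂`, the Laplacian in the variables `y₀,…,y₃`. -/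
def lap2 (F : E → ℍ) : E → ℍ :=
  fun p => ∑ α, fderiv ℝ (fun x => fderiv ℝ F x (e2 α)) p (e2 α)

/-- The Euclidean gradient `∇ρ` of a real valued function on `ℍ² ≅ ℝ⁸`. -/
def grad (ρ : E → ℝ) (p : E) : E :=
  (∑ α, fderiv ℝ ρ p (e1 α) • e α, ∑ α, fderiv ℝ ρ p (e2 α) • e α)

/-- The unit normal `ν = ∇ρ/|∇ρ|` of `S = {ρ = 0}`. -/
def nu (ρ : E → ℝ) (p : E) : E :=
  (Real.sqrt (edot (grad ρ p) (grad ρ p)))⁻¹ • grad ρ p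

/-- `F` is a smooth extension of `f : S → ℍ` to an open neighborhood of `S`. -/
def SmoothExt (S : Set E) (f F : E → ℍ) : Prop :=
  ∃ U : Set E, IsOpen U ∧ S ⊆ U ∧ ContDiffOn ℝ (⊤:ℕ∞) F U ∧ EqOn F f S

/-- `f : S → ℍ` is smooth (it admits a smooth extension near `S`). -/
def SmoothOnS (S : Set E) (f : E → ℍ) : Prop := ∃ F, SmoothExt S f F

/-- `f : S → ℍ` is a CRF function: some smooth extension `F` of `f`
satisfies `𝔇̄F = 0` at every point of `S`. -/
def IsCRF (S : Set E) (f : E → ℍ) : Prop :=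
  ∃ F, SmoothExt S f F ∧ ∀ p ∈ S, dbar1 F p = 0 ∧ dbar2 F p = 0

/-- The expression `∂F/∂ν − ⟨ν, 𝔇̄F⟩` defining `f^⊥` through the extension `F`. -/
def perpOf (ρ : E → ℝ) (F : E → ℍ) (p : E) : ℍ :=
  fderiv ℝ F p (nu ρ p) - qinner (nu ρ p) (Dbar F p)

/-- `f_{(x_α)} = τ_{x_α}(f) + (∂/∂x_α, ν) f^⊥`, computed through the extension `F`. -/
def fx (ρ : E → ℝ) (F : E → ℍ) (α : Fin 4) (p : E) : ℍ :=
  fderiv ℝ F p (e1 α - edot (e1 α) (nu ρ p) • nu ρ p)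
    + edot (e1 α) (nu ρ p) • perpOf ρ F p

/-- `f_{(y_α)} = τ_{y_α}(f) + (∂/∂y_α, ν) f^⊥`, computed through the extension `F`. -/
def fy (ρ : E → ℝ) (F : E → ℍ) (α : Fin 4) (p : E) : ℍ :=
  fderiv ℝ F p (e2 α - edot (e2 α) (nu ρ p) • nu ρ p)
    + edot (e2 α) (nu ρ p) • perpOf ρ F p

/-- `f_{(q̄₁)} = Σ_α i_α f_{(x_α)}`. -/
def fq1bar (ρ : E → ℝ) (F : E → ℍ) (p : E) : ℍ := ∑ α, e α * fx ρ F α p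

/-- `f_{(q̄₂)} = Σ_α i_α f_{(y_α)}`. -/
def fq2bar (ρ : E → ℝ) (F : E → ℍ) (p : E) : ℍ := ∑ α, e α * fy ρ F α p

/-- `f` is admissible: `f` is CRF and the eight functions
`f_{(x_α)}, f_{(y_α)}` (`α = 0,1,2,3`) are CRF. -/
def Admissible (ρ : E → ℝ) (S : Set E) (f : E → ℍ) : Prop :=
  IsCRF S f ∧ ∀ F, SmoothExt S f F →
    ∀ α : Fin 4, IsCRF S (fx ρ F α) ∧ IsCRF S (fy ρ F α)

/-- `∂F/∂ρ`, the derivative along the vector field `∇ρ/|∇ρ|²`. -/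
def drho (ρ : E → ℝ) (F : E → ℍ) : E → ℍ :=
  fun p => fderiv ℝ F p ((edot (grad ρ p) (grad ρ p))⁻¹ • grad ρ p)

/-- The iterated derivative `∂^k F/∂ρ^k`. -/
def drhoIter (ρ : E → ℝ) : ℕ → (E → ℍ) → (E → ℍ)
  | 0 => fun F => F
  | (k+1) => fun F => drho ρ (drhoIter ρ k F)

open Filter Topology

theorem ContinuousLinearMap.exists_eq_smulRight_of_ker_le {𝕜 V M : Type*} [Field 𝕜]
    [TopologicalSpace 𝕜] [AddCommGroup V] [Module 𝕜 V] [TopologicalSpace V]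
    [AddCommGroup M] [Module 𝕜 M] [TopologicalSpace M] [ContinuousSMul 𝕜 M]
    {ℓ : V →L[𝕜] 𝕜} (hℓ : ℓ ≠ 0) {L : V →L[𝕜] M} (h : ∀ v, ℓ v = 0 → L v = 0) :
    ∃ q : M, L = ℓ.smulRight q := by
  obtain ⟨u, hu⟩ : ∃ u, ℓ u ≠ 0 := by
    by_contra! h0
    exact hℓ (ContinuousLinearMap.ext h0)
  refine ⟨(ℓ u)⁻¹ • L u, ContinuousLinearMap.ext fun v => ?_⟩
  have hker : ℓ (v - (ℓ v / ℓ u) • u) = 0 := by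
    simp [div_mul_cancel₀ _ hu]
  rw [ContinuousLinearMap.smulRight_apply, smul_smul, ← div_eq_mul_inv, ← map_smul,
    ← sub_eq_zero, ← map_sub]
  exact h _ hker

section LevelSet

variable {𝕜 V M : Type*} [NontriviallyNormedField 𝕜] [CompleteSpace 𝕜]
  [NormedAddCommGroup V] [NormedSpace 𝕜 V] [CompleteSpace V]
  [NormedAddCommGroup M] [NormedSpace 𝕜 M]

/-- The implicit function theorem parametrizes the level set of `ρ` through `p` by `ker ℓ`. -/
theorem HasStrictFDerivAt.fderiv_apply_eq_zero_of_eventually_eq_zero {ρ : V → 𝕜}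
    {ℓ : V →L[𝕜] 𝕜} {G : V → M} {p : V} (hρ : HasStrictFDerivAt ρ ℓ p) (hℓ : ℓ ≠ 0)
    (hG : DifferentiableAt 𝕜 G p) (hvan : ∀ᶠ x in 𝓝 p, ρ x = ρ p → G x = 0)
    {v : V} (hv : ℓ v = 0) : fderiv 𝕜 G p v = 0 := by
  have hsurj : ℓ.range = ⊤ := Module.Dual.range_eq_top_of_ne_zero (f := (ℓ : V →ₗ[𝕜] 𝕜))
    (by exact_mod_cast hℓ)
  set φ := hρ.implicitFunction ρ ℓ hsurj (ρ p)
  have hφ : HasFDerivAt φ ℓ.ker.subtypeL 0 := (hρ.to_implicitFunction hsurj).hasFDerivAt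
  have hφ0 : φ 0 = p := hρ.implicitFunction_apply_image hsurj
  have hlevel : ∀ᶠ z in 𝓝 (0 : ℓ.ker), ρ (φ z) = ρ p :=
    (tendsto_const_nhds.prodMk_nhds tendsto_id).eventually (hρ.map_implicitFunction_eq hsurj)
  have hnear : ∀ᶠ z in 𝓝 (0 : ℓ.ker), ρ (φ z) = ρ p → G (φ z) = 0 :=
    (hφ0 ▸ hφ.continuousAt : Tendsto φ (𝓝 0) (𝓝 p)).eventually hvan
  have hcomp : HasFDerivAt (G ∘ φ) ((fderiv 𝕜 G p).comp ℓ.ker.subtypeL) 0 :=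
    (hφ0 ▸ hG.hasFDerivAt : HasFDerivAt G (fderiv 𝕜 G p) (φ 0)).comp 0 hφ
  have hzero : HasFDerivAt (G ∘ φ) (0 : ℓ.ker →L[𝕜] M) 0 :=
    (hasFDerivAt_const 0 0).congr_of_eventuallyEq <| by
      filter_upwards [hlevel, hnear] with z h1 h2 using h2 h1
  simpa using congr($(hcomp.unique hzero) ⟨v, hv⟩)

theorem HasStrictFDerivAt.exists_fderiv_eq_smulRight_of_eventually_eq_zero {ρ : V → 𝕜}
    {ℓ : V →L[𝕜] 𝕜} {G : V → M} {p : V} (hρ : HasStrictFDerivAt ρ ℓ p) (hℓ : ℓ ≠ 0)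
    (hG : DifferentiableAt 𝕜 G p) (hvan : ∀ᶠ x in 𝓝 p, ρ x = ρ p → G x = 0) :
    ∃ q : M, fderiv 𝕜 G p = ℓ.smulRight q :=
  ContinuousLinearMap.exists_eq_smulRight_of_ker_le hℓ fun _ hv =>
    hρ.fderiv_apply_eq_zero_of_eventually_eq_zero hℓ hG hvan hv

end LevelSet

open scoped RightActions

theorem sum_qdot_e_smul_e (q : ℍ) : ∑ α, qdot (e α) q • e α = q := by
  have h0 : (e 0).re = 1 ∧ (e 0).imI = 0 ∧ (e 0).imJ = 0 ∧ (e 0).imK = 0 := ⟨rfl, rfl, rfl, rfl⟩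
  have h1 : (e 1).re = 0 ∧ (e 1).imI = 1 ∧ (e 1).imJ = 0 ∧ (e 1).imK = 0 := ⟨rfl, rfl, rfl, rfl⟩
  have h2 : (e 2).re = 0 ∧ (e 2).imI = 0 ∧ (e 2).imJ = 1 ∧ (e 2).imK = 0 := ⟨rfl, rfl, rfl, rfl⟩
  have h3 : (e 3).re = 0 ∧ (e 3).imI = 0 ∧ (e 3).imJ = 0 ∧ (e 3).imK = 1 := ⟨rfl, rfl, rfl, rfl⟩
  ext <;> simp [qdot, Fin.sum_univ_four, Quaternion.re_mul, h0, h1, h2, h3]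

theorem sum_e_mul_sub_qdot_smul (L : Fin 4 → ℍ) (n Q : ℍ) :
    ∑ α, e α * (L α - qdot (e α) n • Q) = ∑ α, e α * L α - n * Q := by
  conv_rhs => rw [← sum_qdot_e_smul_e n]
  simp only [mul_sub, Finset.sum_sub_distrib, Finset.sum_mul, mul_smul_comm, smul_mul_assoc]

theorem edot_self (g : E) : edot g g = Quaternion.normSq g.1 + Quaternion.normSq g.2 := by
  simp [edot, qdot, Quaternion.star_mul_self]

theorem edot_self_nonneg (g : E) : 0 ≤ edot g g := by
  rw [edot_self]
  exact add_nonneg Quaternion.normSq_nonneg Quaternion.normSq_nonneg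

theorem edot_self_pos {g : E} (hg : g ≠ 0) : 0 < edot g g := by
  rcases g with ⟨g₁, g₂⟩
  have h₁ := Quaternion.normSq_nonneg (a := g₁)
  have h₂ := Quaternion.normSq_nonneg (a := g₂)
  rw [edot_self]
  by_contra! h
  refine hg ?_
  rw [Prod.mk_eq_zero, ← Quaternion.normSq_eq_zero, ← Quaternion.normSq_eq_zero]
  constructor <;> linarith

theorem qinner_rmul_self (g : E) (q : ℍ) : qinner g (g <• q) = edot g g • q := by
  simp [qinner, edot_self, ← mul_assoc, Quaternion.star_mul_self, add_smul,
    Quaternion.coe_mul_eq_smul]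

/-- The coefficient of the quaternionic orthogonal projection of `w` onto the right
`ℍ`-line spanned by `g`. -/
def normalCoeff (g w : E) : ℍ := (edot g g)⁻¹ • qinner g w

theorem normalCoeff_rmul_self {g : E} (hg : g ≠ 0) (q : ℍ) : normalCoeff g (g <• q) = q := by
  rw [normalCoeff, qinner_rmul_self, smul_smul, inv_mul_cancel₀ (edot_self_pos hg).ne', one_smul]

theorem nu_rmul_qinner_nu (ρ : E → ℝ) (p : E) (w : E) :
    nu ρ p <• qinner (nu ρ p) w = grad ρ p <• normalCoeff (grad ρ p) w := by
  have hsq : ((√(edot (grad ρ p) (grad ρ p)))⁻¹) * (√(edot (grad ρ p) (grad ρ p)))⁻¹ =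
      (edot (grad ρ p) (grad ρ p))⁻¹ := by
    rw [← mul_inv, Real.mul_self_sqrt (edot_self_nonneg _)]
  have hq : qinner (nu ρ p) w = (√(edot (grad ρ p) (grad ρ p)))⁻¹ • qinner (grad ρ p) w := by
    simp only [nu, qinner, Prod.smul_fst, Prod.smul_snd, Quaternion.star_smul, smul_mul_assoc,
      smul_add]
  rw [hq, normalCoeff, ← hsq]
  ext1 <;> simp only [nu, Prod.smul_fst, Prod.smul_snd, op_smul_eq_mul, smul_mul_assoc,
    mul_smul_comm, smul_smul]

theorem edot_e1 (α : Fin 4) (w : E) : edot (e1 α) w = qdot (e α) w.1 := by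
  simp [edot, e1, qdot, Quaternion.re_zero]

theorem edot_e2 (α : Fin 4) (w : E) : edot (e2 α) w = qdot (e α) w.2 := by
  simp [edot, e2, qdot, Quaternion.re_zero]

theorem fx_eq (ρ : E → ℝ) (F : E → ℍ) (α : Fin 4) (p : E) :
    fx ρ F α p = fderiv ℝ F p (e1 α) - qdot (e α) (nu ρ p).1 • qinner (nu ρ p) (Dbar F p) := by
  simp only [fx, perpOf, map_sub, map_smul, smul_sub, ← edot_e1]
  abel

theorem fy_eq (ρ : E → ℝ) (F : E → ℍ) (α : Fin 4) (p : E) :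
    fy ρ F α p = fderiv ℝ F p (e2 α) - qdot (e α) (nu ρ p).2 • qinner (nu ρ p) (Dbar F p) := by
  simp only [fy, perpOf, map_sub, map_smul, smul_sub, ← edot_e2]
  abel

theorem fqbar_eq (ρ : E → ℝ) (F : E → ℍ) (p : E) :
    (fq1bar ρ F p, fq2bar ρ F p) = Dbar F p - grad ρ p <• normalCoeff (grad ρ p) (Dbar F p) := by
  rw [← nu_rmul_qinner_nu]
  ext1
  · simp only [fq1bar, fx_eq, sum_e_mul_sub_qdot_smul]; rfl
  · simp only [fq2bar, fy_eq, sum_e_mul_sub_qdot_smul]; rfl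

theorem Dbar_sub {F G : E → ℍ} {p : E} (hF : DifferentiableAt ℝ F p)
    (hG : DifferentiableAt ℝ G p) : Dbar (fun x => F x - G x) p = Dbar F p - Dbar G p := by
  ext1 <;> simp [Dbar, dbar1, dbar2, fderiv_fun_sub hF hG, mul_sub]

theorem Dbar_eq_grad_rmul_of_fderiv_eq_smulRight {ρ : E → ℝ} {G : E → ℍ} {p : E} {q : ℍ}
    (h : fderiv ℝ G p = (fderiv ℝ ρ p).smulRight q) : Dbar G p = grad ρ p <• q := by
  ext1 <;> simp [Dbar, dbar1, dbar2, grad, h, Finset.sum_mul]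

theorem fderiv_ne_zero_of_grad_ne_zero {ρ : E → ℝ} {p : E} (h : grad ρ p ≠ 0) :
    fderiv ℝ ρ p ≠ 0 := by
  rintro h0
  exact h (by simp [grad, h0])

theorem exists_Dbar_eq_add_grad_rmul {ρ : E → ℝ} {F G : E → ℍ} {p : E}
    (hρ : ContDiffAt ℝ 1 ρ p) (hgrad : grad ρ p ≠ 0) (hF : DifferentiableAt ℝ F p)
    (hG : DifferentiableAt ℝ G p) (hFG : ∀ᶠ x in 𝓝 p, ρ x = ρ p → F x = G x) :
    ∃ q : ℍ, Dbar F p = Dbar G p + grad ρ p <• q := by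
  obtain ⟨q, hq⟩ :=
    (hρ.hasStrictFDerivAt one_ne_zero).exists_fderiv_eq_smulRight_of_eventually_eq_zero
      (fderiv_ne_zero_of_grad_ne_zero hgrad) (hF.fun_sub hG)
      (by filter_upwards [hFG] with x hx h using sub_eq_zero.2 (hx h))
  refine ⟨q, ?_⟩
  rw [← Dbar_eq_grad_rmul_of_fderiv_eq_smulRight hq, Dbar_sub hF hG]
  abel

theorem Dbar_sub_smul_of_eq_zero {ρ : E → ℝ} {F : E → ℍ} {g : E → ℍ} {p : E}
    (hρ : DifferentiableAt ℝ ρ p) (hF : DifferentiableAt ℝ F p) (hg : DifferentiableAt ℝ g p)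
    (hρp : ρ p = 0) : Dbar (fun x => F x - ρ x • g x) p = Dbar F p - grad ρ p <• g p := by
  have h : fderiv ℝ (fun x => ρ x • g x) p = (fderiv ℝ ρ p).smulRight (g p) := by
    refine ContinuousLinearMap.ext fun v => ?_
    simp [fderiv_fun_smul hρ hg, hρp]
  rw [Dbar_sub hF (hρ.fun_smul hg), Dbar_eq_grad_rmul_of_fderiv_eq_smulRight h]

theorem qdot_eq_inner (p q : ℍ) : qdot p q = inner ℝ p q := by
  simp only [qdot, Quaternion.inner_def, Quaternion.re_mul, Quaternion.re_star, Quaternion.imI_star,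
    Quaternion.imJ_star, Quaternion.imK_star]
  ring

def quaternionStarCLM : ℍ →L[ℝ] ℍ :=
  LinearMap.toContinuousLinearMap
    { toFun := star, map_add' := star_add, map_smul' := Quaternion.star_smul }

section Smoothness

variable {s : Set E}

theorem ContDiffOn.fderiv_apply_of_isOpen {𝕜 V M : Type*} [NontriviallyNormedField 𝕜]
    [NormedAddCommGroup V] [NormedSpace 𝕜 V] [NormedAddCommGroup M] [NormedSpace 𝕜 M]
    {f : V → M} {s : Set V} (hs : IsOpen s) (hf : ContDiffOn 𝕜 (⊤ : ℕ∞) f s) (v : V) :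
    ContDiffOn 𝕜 (⊤ : ℕ∞) (fun p => fderiv 𝕜 f p v) s :=
  (hf.fderiv_of_isOpen hs (by exact_mod_cast le_top)).clm_apply contDiffOn_const

theorem ContDiffOn.grad {ρ : E → ℝ} (hs : IsOpen s) (hρ : ContDiffOn ℝ (⊤ : ℕ∞) ρ s) :
    ContDiffOn ℝ (⊤ : ℕ∞) (grad ρ) s :=
  .prodMk (.sum fun _ _ => (hρ.fderiv_apply_of_isOpen hs _).smul contDiffOn_const)
    (.sum fun _ _ => (hρ.fderiv_apply_of_isOpen hs _).smul contDiffOn_const)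

theorem ContDiffOn.Dbar {F : E → ℍ} (hs : IsOpen s) (hF : ContDiffOn ℝ (⊤ : ℕ∞) F s) :
    ContDiffOn ℝ (⊤ : ℕ∞) (Dbar F) s :=
  .prodMk (.sum fun _ _ => contDiffOn_const.mul (hF.fderiv_apply_of_isOpen hs _))
    (.sum fun _ _ => contDiffOn_const.mul (hF.fderiv_apply_of_isOpen hs _))

theorem ContDiffOn.normalCoeff {n : WithTop ℕ∞} {g w : E → E} (hg : ContDiffOn ℝ n g s)
    (hw : ContDiffOn ℝ n w s) (hg0 : ∀ x ∈ s, g x ≠ 0) :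
    ContDiffOn ℝ n (fun x => normalCoeff (g x) (w x)) s := by
  have hnormSq : ContDiffOn ℝ n (fun x => edot (g x) (g x)) s := by
    simp only [edot, qdot_eq_inner]
    exact (hg.fst.inner ℝ hg.fst).add (hg.snd.inner ℝ hg.snd)
  have hqinner : ContDiffOn ℝ n (fun x => qinner (g x) (w x)) s :=
    ((quaternionStarCLM.contDiff.comp_contDiffOn hg.fst).mul hw.fst).add
      ((quaternionStarCLM.contDiff.comp_contDiffOn hg.snd).mul hw.snd)
  exact (hnormSq.inv fun x hx => (edot_self_pos (hg0 x hx)).ne').smul hqinner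

end Smoothness

theorem fqbar_eq_zero_of_Dbar_eq_grad_rmul {ρ : E → ℝ} {F : E → ℍ} {p : E} {q : ℍ}
    (hgrad : grad ρ p ≠ 0) (h : Dbar F p = grad ρ p <• q) :
    (fq1bar ρ F p, fq2bar ρ F p) = 0 := by
  rw [fqbar_eq, h, normalCoeff_rmul_self hgrad, sub_self]

theorem SmoothExt.differentiableAt {S : Set E} {f F : E → ℍ} (hF : SmoothExt S f F) {p : E}
    (hp : p ∈ S) : DifferentiableAt ℝ F p := by
  obtain ⟨U, hU, hSU, hFU, -⟩ := hF
  exact (hFU.differentiableOn (by simp)).differentiableAt (hU.mem_nhds (hSU hp))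

section Hypersurface

variable {Ω : Set E} {ρ : E → ℝ} {S : Set E}

theorem fqbar_eq_zero_of_isCRF (hΩ : IsOpen Ω) (hρ : ContDiffOn ℝ (⊤ : ℕ∞) ρ Ω)
    (hS : S = {p ∈ Ω | ρ p = 0}) (hgrad : ∀ p ∈ S, grad ρ p ≠ 0) {f F : E → ℍ}
    (hf : IsCRF S f) (hF : SmoothExt S f F) {p : E} (hp : p ∈ S) :
    (fq1bar ρ F p, fq2bar ρ F p) = 0 := by
  subst hS
  obtain ⟨F₀, hF₀, hDbarF₀⟩ := hf
  have hagree : ∀ᶠ x in 𝓝 p, ρ x = ρ p → F x = F₀ x := by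
    filter_upwards [hΩ.mem_nhds hp.1] with x hx hρx
    have hxS : x ∈ {p ∈ Ω | ρ p = 0} := ⟨hx, hρx.trans hp.2⟩
    obtain ⟨-, -, -, -, hFf⟩ := hF
    obtain ⟨-, -, -, -, hF₀f⟩ := hF₀
    rw [hFf hxS, hF₀f hxS]
  obtain ⟨q, hq⟩ := exists_Dbar_eq_add_grad_rmul
    ((hρ.contDiffAt (hΩ.mem_nhds hp.1)).of_le (by simp)) (hgrad p hp)
    (hF.differentiableAt hp) (hF₀.differentiableAt hp) hagree
  refine fqbar_eq_zero_of_Dbar_eq_grad_rmul (q := q) (hgrad p hp) ?_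
  rw [hq, show Dbar F₀ p = 0 from Prod.mk_eq_zero.2 (hDbarF₀ p hp), zero_add]

theorem isCRF_of_fqbar_eq_zero (hΩ : IsOpen Ω) (hρ : ContDiffOn ℝ (⊤ : ℕ∞) ρ Ω)
    (hS : S = {p ∈ Ω | ρ p = 0}) (hgrad : ∀ p ∈ S, grad ρ p ≠ 0) {f F : E → ℍ}
    (hF : SmoothExt S f F) (hfq : ∀ p ∈ S, (fq1bar ρ F p, fq2bar ρ F p) = 0) :
    IsCRF S f := by
  subst hS
  obtain ⟨U, hU, hSU, hFU, hFf⟩ := hF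
  have hgradΩ := ContDiffOn.grad hΩ hρ
  set V := U ∩ (Ω ∩ grad ρ ⁻¹' {0}ᶜ)
  have hV : IsOpen V :=
    hU.inter (hgradΩ.continuousOn.isOpen_inter_preimage hΩ isOpen_compl_singleton)
  have hSV : {p ∈ Ω | ρ p = 0} ⊆ V := fun p hp => ⟨hSU hp, hp.1, hgrad p hp⟩
  set g₀ := fun x => normalCoeff (grad ρ x) (Dbar F x)
  have hg₀ : ContDiffOn ℝ (⊤ : ℕ∞) g₀ V :=
    (hgradΩ.mono fun x hx => hx.2.1).normalCoeff ((ContDiffOn.Dbar hU hFU).mono fun x hx => hx.1)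
      fun x hx => hx.2.2
  have hρV : ContDiffOn ℝ (⊤ : ℕ∞) ρ V := hρ.mono fun x hx => hx.2.1
  have hFV : ContDiffOn ℝ (⊤ : ℕ∞) F V := hFU.mono fun x hx => hx.1
  refine ⟨fun x => F x - ρ x • g₀ x, ⟨V, hV, hSV, hFV.sub (hρV.smul hg₀), fun x hx => ?_⟩,
    fun p hp => Prod.mk_eq_zero.1 ?_⟩
  · simp [hx.2, hFf hx]
  · have hdiff {M : Type} [NormedAddCommGroup M] [NormedSpace ℝ M] {G : E → M}
        (hG : ContDiffOn ℝ (⊤ : ℕ∞) G V) : DifferentiableAt ℝ G p :=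
      (hG.differentiableOn (by simp)).differentiableAt (hV.mem_nhds (hSV hp))
    change Dbar _ p = 0
    rw [Dbar_sub_smul_of_eq_zero (hdiff hρV) (hdiff hFV) (hdiff hg₀) hp.2, ← fqbar_eq, hfq p hp]

end Hypersurface

/-- Theorem lu56, a ⟺ b. A smooth `f : S → ℍ` is a CRF
function if and only if `f_{(q̄₁)} ≡ f_{(q̄₂)} ≡ 0` on `S` (the latter computed
through any smooth extension of `f`, the value being independent of it). -/
theorem crf_iff_tangential_vanishing
    (Ω : Set E) (hΩ : IsOpen Ω)
    (ρ : E → ℝ) (hρ : ContDiffOn ℝ (⊤:ℕ∞) ρ Ω)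
    (S : Set E) (hS : S = {p ∈ Ω | ρ p = 0})
    (hgrad : ∀ p ∈ S, grad ρ p ≠ 0)
    (f : E → ℍ) (hf : SmoothOnS S f) :
    IsCRF S f ↔
      ∀ F, SmoothExt S f F → ∀ p ∈ S, fq1bar ρ F p = 0 ∧ fq2bar ρ F p = 0 := by
  simp only [← Prod.mk_eq_zero]
  refine ⟨fun hcrf F hF p hp => fqbar_eq_zero_of_isCRF hΩ hρ hS hgrad hcrf hF hp, fun h => ?_⟩
  obtain ⟨F, hF⟩ := hf
  exact isCRF_of_fqbar_eq_zero hΩ hρ hS hgrad hF (h F hF)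
end
end

section
/- Let Σ ⊂ ℍ² ≅ ℝ⁸ be an open half-space, S ⊂ Σ a connected smooth hypersurface closed in Σ such that Σ∖S has exactly two connected components D and W with D bounded, and let f : S → ℍ be a smooth admissible function with sup_S |f| < ∞. If F is the ℍ-holomorphic extension of f to D (smooth up to S, with F|_S = f), then |F(q)| ≤ sup_S |f| for every q ∈ D. -/
/-!
Quaternionic analysis in two variables: the Cauchy–Riemann–Fueter operator,
CRF functions and admissible functions on a hypersurface `S ⊂ ℍ²`.
-/

noncomputable section

open Set

/-- The quaternions. -/
local notation "ℍ" => Quaternion ℝ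

/-!
Slicing `D` by a left quaternionic line `h ↦ q + (a h, b h)` on which the linear form `L` is
constant (one exists because `8 > 4`) reduces the claim to one quaternionic variable: the slice
`G(h) = F(q + (a h, b h))` satisfies `Σ_α i_α ∂G/∂x_α = ā ∂F/∂q̄₁ + b̄ ∂F/∂q̄₂ = 0`, hence is
harmonic, since by symmetry of second derivatives `Δ = Σ_β ī_β ∂_β ∘ Σ_α i_α ∂_α`. The slice
domain is bounded and its frontier is mapped into `S`, because the slice stays in the half-space
and `W` is open. For a harmonic `G` the function `⟪G(0), G⟫` is harmonic, so the weak maximum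
principle gives `|G(0)|² ≤ |G(0)| sup_S |f|`.
-/

open Filter Topology InnerProductSpace Laplacian Module

section SecondDerivativeTest

theorem IsLocalMax.deriv_deriv_nonpos {g : ℝ → ℝ} {t : ℝ} (hmax : IsLocalMax g t)
    (hg : ContinuousAt g t) : deriv (deriv g) t ≤ 0 := by
  by_contra! hpos
  -- otherwise the second-derivative test makes `t` a local minimum too, so `g` is locally constant
  have hconst : g =ᶠ[𝓝 t] fun _ => g t := by
    filter_upwards [isLocalMin_of_deriv_deriv_pos hpos hmax.deriv_eq_zero hg, hmax] with s h₁ h₂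
    exact le_antisymm h₂ h₁
  have hzero : deriv g =ᶠ[𝓝 t] fun _ => 0 := by simpa using hconst.deriv
  simp [hzero.deriv_eq] at hpos

variable {X : Type*} [NormedAddCommGroup X] [NormedSpace ℝ X]

theorem hasDerivAt_add_smul (m v : X) (t : ℝ) : HasDerivAt (fun s : ℝ => m + s • v) v t := by
  simpa using ((hasDerivAt_id t).smul_const v).const_add m

theorem IsLocalMax.fderiv_fderiv_apply_self_nonpos {ψ : X → ℝ} {m : X} (hmax : IsLocalMax ψ m)
    (hψ : ContDiffAt ℝ 2 ψ m) (v : X) : fderiv ℝ (fderiv ℝ ψ) m v v ≤ 0 := by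
  have hline : HasDerivAt (fun s : ℝ => m + s • v) v 0 := hasDerivAt_add_smul m v 0
  have hm : m + (0 : ℝ) • v = m := by simp
  have hderiv : deriv (fun s : ℝ => ψ (m + s • v)) =ᶠ[𝓝 0]
      fun s => fderiv ℝ ψ (m + s • v) v := by
    have hcont : Tendsto (fun s : ℝ => m + s • v) (𝓝 0) (𝓝 m) := by
      simpa using hline.continuousAt.tendsto
    filter_upwards [hcont.eventually (hψ.eventually (by simp))] with s hs
    exact ((hs.differentiableAt two_ne_zero).hasFDerivAt.comp_hasDerivAt s
      (hasDerivAt_add_smul m v s)).deriv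
  have hderiv2 : HasDerivAt (fun s : ℝ => fderiv ℝ ψ (m + s • v) v)
      (fderiv ℝ (fderiv ℝ ψ) m v v) 0 :=
    (ContinuousLinearMap.apply ℝ ℝ v).hasFDerivAt.comp_hasDerivAt 0
      ((((hψ.fderiv_right (m := 1) le_rfl).differentiableAt one_ne_zero).hasFDerivAt
        ).comp_hasDerivAt_of_eq 0 hline hm.symm)
  have hmax' : IsLocalMax (fun s : ℝ => ψ (m + s • v)) 0 :=
    IsLocalMax.comp_continuous (g := fun s : ℝ => m + s • v) (hm.symm ▸ hmax) hline.continuousAt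
  have := hmax'.deriv_deriv_nonpos (hψ.continuousAt.comp_of_eq hline.continuousAt hm)
  rwa [hderiv.deriv_eq, hderiv2.deriv] at this

end SecondDerivativeTest

section MaximumPrinciple

variable {X : Type*} [NormedAddCommGroup X] [InnerProductSpace ℝ X] [FiniteDimensional ℝ X]

theorem laplacian_eq_sum_fderiv_fderiv {ι F : Type*} [Fintype ι] [NormedAddCommGroup F]
    [NormedSpace ℝ F] (f : X → F) (b : OrthonormalBasis ι ℝ X) (x : X) :
    Δ f x = ∑ i, fderiv ℝ (fderiv ℝ f) x (b i) (b i) := by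
  simp [laplacian_eq_iteratedFDeriv_orthonormalBasis f b, iteratedFDeriv_two_apply]

theorem laplacian_norm_sq (x : X) : Δ (fun y : X => ‖y‖ ^ 2) x = 2 * finrank ℝ X := by
  have hD2 : fderiv ℝ (fderiv ℝ fun y : X => ‖y‖ ^ 2) x = 2 • innerSL ℝ := by
    rw [funext fderiv_norm_sq_apply]
    exact (2 • innerSL ℝ : X →L[ℝ] X →L[ℝ] ℝ).fderiv
  have h : ∀ v, fderiv ℝ (fderiv ℝ fun y : X => ‖y‖ ^ 2) x v v = 2 * ‖v‖ ^ 2 := fun v => by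
    rw [hD2, smul_apply, smul_apply, innerSL_apply_apply, real_inner_self_eq_norm_sq, nsmul_eq_mul,
      Nat.cast_ofNat]
  simp [laplacian_eq_sum_fderiv_fderiv _ (stdOrthonormalBasis ℝ X), h, mul_comm]

theorem IsLocalMax.laplacian_nonpos {ψ : X → ℝ} {m : X} (hmax : IsLocalMax ψ m)
    (hψ : ContDiffAt ℝ 2 ψ m) : Δ ψ m ≤ 0 := by
  rw [laplacian_eq_sum_fderiv_fderiv ψ (stdOrthonormalBasis ℝ X)]
  exact Finset.sum_nonpos fun i _ => hmax.fderiv_fderiv_apply_self_nonpos hψ _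

variable [Nontrivial X]

theorem HarmonicAt.not_isLocalMax_add_smul_norm_sq {u : X → ℝ} {m : X} (hu : HarmonicAt u m)
    {ε : ℝ} (hε : 0 < ε) : ¬ IsLocalMax (u + ε • fun y => ‖y‖ ^ 2) m := by
  intro hmax
  have hN : ContDiffAt ℝ 2 (fun y : X => ‖y‖ ^ 2) m := (contDiff_norm_sq ℝ).contDiffAt
  have hεN : ContDiffAt ℝ 2 (ε • fun y : X => ‖y‖ ^ 2) m := hN.const_smul ε
  have hΔ : Δ (u + ε • fun y : X => ‖y‖ ^ 2) m = ε * (2 * finrank ℝ X) := by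
    rw [hu.1.laplacian_add hεN, laplacian_smul ε hN, hu.2.eq_of_nhds, laplacian_norm_sq,
      Pi.zero_apply, zero_add, smul_eq_mul]
  have hle := hmax.laplacian_nonpos (hu.1.add hεN)
  have hdim : (0 : ℝ) < finrank ℝ X := mod_cast finrank_pos
  nlinarith

theorem HarmonicOnNhd.le_of_forall_mem_frontier_le {u : X → ℝ} {U : Set X} {M : ℝ}
    (hU : Bornology.IsBounded U) (hu : HarmonicOnNhd u U) (hc : ContinuousOn u (closure U))
    (hM : ∀ z ∈ frontier U, u z ≤ M) {x : X} (hx : x ∈ closure U) : u x ≤ M := by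
  obtain ⟨R, hR⟩ := hU.closure.exists_norm_le
  have key : ∀ ε > 0, u x ≤ M + ε * R ^ 2 := by
    intro ε hε
    set ψ : X → ℝ := u + ε • fun y => ‖y‖ ^ 2
    obtain ⟨m, hmU, hmax⟩ := hU.isCompact_closure.exists_isMaxOn ⟨x, hx⟩
      (hc.add (continuous_const.smul (by fun_prop)).continuousOn : ContinuousOn ψ _)
    have hm : m ∈ frontier U := by
      by_contra hm
      have hmi : m ∈ interior U := closure_sdiff_frontier U ▸ ⟨hmU, hm⟩
      exact HarmonicAt.not_isLocalMax_add_smul_norm_sq (hu m (interior_subset hmi)) hε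
        (hmax.isLocalMax (mem_of_superset (isOpen_interior.mem_nhds hmi)
          (interior_subset.trans subset_closure)))
    have hRm : ‖m‖ ^ 2 ≤ R ^ 2 := pow_le_pow_left₀ (norm_nonneg m) (hR m hmU) 2
    calc u x ≤ ψ x := le_add_of_nonneg_right (mul_nonneg hε.le (sq_nonneg ‖x‖))
      _ ≤ ψ m := hmax hx
      _ = u m + ε * ‖m‖ ^ 2 := rfl
      _ ≤ M + ε * R ^ 2 := by gcongr; exact hM m hm
  refine le_of_forall_pos_le_add fun δ hδ => (key (δ / (R ^ 2 + 1)) (by positivity)).trans ?_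
  gcongr
  rw [div_mul_eq_mul_div, div_le_iff₀ (by positivity)]
  nlinarith [sq_nonneg R]

theorem HarmonicOnNhd.norm_le_of_forall_mem_frontier_norm_le {F : Type*} [NormedAddCommGroup F]
    [InnerProductSpace ℝ F] {u : X → F} {U : Set X} {M : ℝ} (hU : Bornology.IsBounded U)
    (hu : HarmonicOnNhd u U) (hc : ContinuousOn u (closure U))
    (hM : ∀ z ∈ frontier U, ‖u z‖ ≤ M) {x : X} (hx : x ∈ closure U) : ‖u x‖ ≤ M := by
  have hfront : (frontier U).Nonempty := nonempty_frontier_iff.2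
    ⟨closure_nonempty_iff.1 ⟨x, hx⟩, fun h => NormedSpace.unbounded_univ ℝ X (h ▸ hU)⟩
  have hM0 : 0 ≤ M := (norm_nonneg _).trans (hM _ hfront.some_mem)
  have hsq : ‖u x‖ ^ 2 ≤ ‖u x‖ * M := by
    simpa [real_inner_self_eq_norm_sq] using
      HarmonicOnNhd.le_of_forall_mem_frontier_le hU (hu.comp_CLM (innerSL ℝ (u x)))
        ((innerSL ℝ (u x)).continuous.comp_continuousOn hc)
        (fun z hz => (real_inner_le_norm _ _).trans
          (mul_le_mul_of_nonneg_left (hM z hz) (norm_nonneg _))) hx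
  nlinarith [norm_nonneg (u x)]

end MaximumPrinciple

theorem Quaternion.inner_mul_eq_inner_star_mul (a p q : ℍ) :
    ⟪p, a * q⟫_ℝ = ⟪q, star a * p⟫_ℝ := by
  simp only [Quaternion.inner_def, star_mul, star_star, Quaternion.re_mul, Quaternion.re_star,
    Quaternion.imI_mul, Quaternion.imJ_mul, Quaternion.imK_mul, Quaternion.imI_star,
    Quaternion.imJ_star, Quaternion.imK_star]
  ring

theorem Quaternion.star_mul_add_star_mul (p q : ℍ) :
    star p * q + star q * p = ((2 * ⟪p, q⟫_ℝ : ℝ) : ℍ) := by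
  ext <;> simp [Quaternion.inner_def] <;> ring

namespace OrthonormalBasis

variable {ι : Type*} [Fintype ι] (b : OrthonormalBasis ι ℝ ℍ)

theorem map_eq_sum_inner_smul (T : ℍ →ₗ[ℝ] ℍ) (y : ℍ) : T y = ∑ j, ⟪b j, y⟫_ℝ • T (b j) := by
  conv_lhs => rw [← b.sum_repr' y]
  simp

theorem sum_mul_map_mul (T : ℍ →ₗ[ℝ] ℍ) (a : ℍ) :
    ∑ i, b i * T (a * b i) = star a * ∑ i, b i * T (b i) := by
  -- expand `T (a * b i)` in the basis and move `a` across the inner product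
  calc ∑ i, b i * T (a * b i) = ∑ j, (∑ i, ⟪b i, star a * b j⟫_ℝ • b i) * T (b j) := by
        simp_rw [Finset.sum_mul, smul_mul_assoc]
        rw [Finset.sum_comm]
        refine Finset.sum_congr rfl fun i _ => ?_
        rw [b.map_eq_sum_inner_smul T (a * b i), Finset.mul_sum]
        refine Finset.sum_congr rfl fun j _ => ?_
        rw [mul_smul_comm, Quaternion.inner_mul_eq_inner_star_mul]
    _ = star a * ∑ j, b j * T (b j) := by
        simp_rw [b.sum_repr', Finset.mul_sum, mul_assoc]

theorem sum_star_mul_sum_mul_of_symm (H : ι → ι → ℍ) (hH : ∀ i j, H i j = H j i) :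
    ∑ j, star (b j) * ∑ i, b i * H j i = ∑ i, H i i := by
  classical
  have hswap : ∑ j, star (b j) * ∑ i, b i * H j i = ∑ j, ∑ i, star (b i) * b j * H j i := by
    simp_rw [Finset.mul_sum, ← mul_assoc]
    rw [Finset.sum_comm]
    simp_rw [hH]
  -- symmetrising in `i, j` turns the coefficients into `2 ⟪b j, b i⟫ = 2 δ_ij`
  apply smul_right_injective ℍ (two_ne_zero : (2 : ℝ) ≠ 0)
  calc (2 : ℝ) • ∑ j, star (b j) * ∑ i, b i * H j i
      = ∑ j, ∑ i, (star (b j) * b i + star (b i) * b j) * H j i := by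
        rw [two_smul]
        nth_rewrite 2 [hswap]
        simp_rw [Finset.mul_sum, ← mul_assoc, add_mul, Finset.sum_add_distrib]
    _ = (2 : ℝ) • ∑ i, H i i := by
        simp_rw [Quaternion.star_mul_add_star_mul, b.inner_eq_ite, Quaternion.coe_mul_eq_smul]
        simp [Finset.smul_sum]

end OrthonormalBasis

theorem orthonormal_e : Orthonormal ℝ e := by
  rw [orthonormal_iff_ite]
  intro i j
  simp only [Quaternion.inner_def, Quaternion.re_mul, Quaternion.re_star, Quaternion.imI_star,
    Quaternion.imJ_star, Quaternion.imK_star]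
  fin_cases i <;> fin_cases j <;> simp [e, Quaternion.re_one, Quaternion.imI_one,
    Quaternion.imJ_one, Quaternion.imK_one]

def eBasis : OrthonormalBasis (Fin 4) ℝ ℍ :=
  OrthonormalBasis.mk orthonormal_e
    (orthonormal_e.linearIndependent.span_eq_top_of_card_eq_finrank
      (by simp [Quaternion.finrank_eq_four])).ge

@[simp] theorem coe_eBasis : ⇑eBasis = e := OrthonormalBasis.coe_mk _ _

/-- `fueterCLM (fderiv ℝ G x) = Σ_α i_α ∂G/∂x_α (x)` is the Cauchy–Riemann–Fueter operator of
`G : ℍ → ℍ`. -/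
def fueterCLM : (ℍ →L[ℝ] ℍ) →L[ℝ] ℍ :=
  ∑ α, (ContinuousLinearMap.mul ℝ ℍ (e α)).comp (ContinuousLinearMap.apply ℝ ℍ (e α))

theorem fueterCLM_apply (T : ℍ →L[ℝ] ℍ) : fueterCLM T = ∑ α, e α * T (e α) := by
  simp [fueterCLM]

theorem fueterCLM_comp_mul (T : ℍ →L[ℝ] ℍ) (a : ℍ) :
    fueterCLM (T.comp (ContinuousLinearMap.mul ℝ ℍ a)) = star a * fueterCLM T := by
  simpa [fueterCLM_apply] using eBasis.sum_mul_map_mul T.toLinearMap a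

theorem laplacian_eq_sum_star_mul_fueterCLM {G : ℍ → ℍ} {x : ℍ} (hG : ContDiffAt ℝ 2 G x) :
    Δ G x = ∑ β, star (e β) * fueterCLM (fderiv ℝ (fderiv ℝ G) x (e β)) := by
  rw [laplacian_eq_sum_fderiv_fderiv G eBasis]
  simpa [fueterCLM_apply] using (eBasis.sum_star_mul_sum_mul_of_symm _
    fun i j => hG.isSymmSndFDerivAt (by simp) (eBasis i) (eBasis j)).symm

theorem harmonicOnNhd_of_fueterCLM_fderiv_eq_zero {G : ℍ → ℍ} {U : Set ℍ} (hU : IsOpen U)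
    (hG : ContDiffOn ℝ 2 G U) (hreg : ∀ x ∈ U, fueterCLM (fderiv ℝ G x) = 0) :
    HarmonicOnNhd G U := by
  intro x hx
  refine ⟨hG.contDiffAt (hU.mem_nhds hx), ?_⟩
  filter_upwards [hU.mem_nhds hx] with y hy
  have hGy := hG.contDiffAt (hU.mem_nhds hy)
  have hzero : fderiv ℝ (fun z => fueterCLM (fderiv ℝ G z)) y = 0 := by
    rw [(eventuallyEq_of_mem (hU.mem_nhds hy) hreg).fderiv_eq, fderiv_const_apply]
  have hchain : fderiv ℝ (fun z => fueterCLM (fderiv ℝ G z)) y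
      = fueterCLM.comp (fderiv ℝ (fderiv ℝ G) y) :=
    (fueterCLM.hasFDerivAt.comp y
      ((hGy.fderiv_right (m := 1) le_rfl).differentiableAt one_ne_zero).hasFDerivAt).fderiv
  rw [laplacian_eq_sum_star_mul_fueterCLM hGy]
  simp [← ContinuousLinearMap.comp_apply, ← hchain, hzero]

def sliceCLM (a b : ℍ) : ℍ →L[ℝ] E :=
  (ContinuousLinearMap.mul ℝ ℍ a).prod (ContinuousLinearMap.mul ℝ ℍ b)

@[simp] theorem sliceCLM_apply (a b h : ℍ) : sliceCLM a b h = (a * h, b * h) := rfl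

theorem exists_sliceCLM_ne_zero (L : E →ₗ[ℝ] ℝ) :
    ∃ a b : ℍ, (a, b) ≠ 0 ∧ ∀ h, L (sliceCLM a b h) = 0 := by
  -- `Φ (a, b) = L ∘ sliceCLM a b` is not injective, as `dim ℍ² = 8 > 4 = dim (ℍ →ₗ[ℝ] ℝ)`
  let Φ : E →ₗ[ℝ] ℍ →ₗ[ℝ] ℝ := LinearMap.llcomp ℝ ℍ E ℝ L ∘ₗ
    (LinearMap.prodEquiv (S := ℝ)).toLinearMap ∘ₗ (LinearMap.mul ℝ ℍ).prodMap (LinearMap.mul ℝ ℍ)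
  have hΦ : LinearMap.ker Φ ≠ ⊥ :=
    LinearMap.ker_ne_bot_of_finrank_lt (by simp [Quaternion.finrank_eq_four])
  obtain ⟨⟨a, b⟩, hab, hne⟩ := (Submodule.ne_bot_iff _).1 hΦ
  exact ⟨a, b, hne, fun h => LinearMap.congr_fun hab h⟩

theorem sliceCLM_injective {a b : ℍ} (hab : (a, b) ≠ 0) : Function.Injective (sliceCLM a b) := by
  intro h₁ h₂ h
  simp only [sliceCLM_apply, Prod.mk.injEq] at h
  by_cases ha : a = 0
  · exact mul_left_cancel₀ (fun hb => hab (by simp [ha, hb])) h.2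
  · exact mul_left_cancel₀ ha h.1

theorem isBounded_preimage_add_sliceCLM {a b : ℍ} (hab : (a, b) ≠ 0) (q : E) {D : Set E}
    (hD : Bornology.IsBounded D) :
    Bornology.IsBounded ((fun h => q + sliceCLM a b h) ⁻¹' D) := by
  obtain ⟨K, -, hK⟩ := (sliceCLM a b : ℍ →ₗ[ℝ] E).exists_antilipschitzWith
    (LinearMap.ker_eq_bot.2 (sliceCLM_injective hab))
  have hι : AntilipschitzWith K (fun h => q + sliceCLM a b h) :=
    AntilipschitzWith.of_le_mul_dist fun x y => by simpa [dist_add_left] using hK.le_mul_dist x y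
  exact hι.isBounded_preimage hD

theorem fueterCLM_comp_sliceCLM (T : E →L[ℝ] ℍ) (a b : ℍ) :
    fueterCLM (T.comp (sliceCLM a b)) = star a * fueterCLM (T.comp (.inl ℝ ℍ ℍ))
      + star b * fueterCLM (T.comp (.inr ℝ ℍ ℍ)) := by
  have hsplit : T.comp (sliceCLM a b) = (T.comp (.inl ℝ ℍ ℍ)).comp (.mul ℝ ℍ a)
      + (T.comp (.inr ℝ ℍ ℍ)).comp (.mul ℝ ℍ b) := by
    refine ContinuousLinearMap.ext fun h => ?_
    simp [← map_add]
  rw [hsplit, map_add, fueterCLM_comp_mul, fueterCLM_comp_mul]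

theorem fueterCLM_fderiv_comp_add_sliceCLM {F : E → ℍ} {q : E} {a b x : ℍ}
    (hF : DifferentiableAt ℝ F (q + sliceCLM a b x)) :
    fueterCLM (fderiv ℝ (fun h => F (q + sliceCLM a b h)) x)
      = star a * dbar1 F (q + sliceCLM a b x) + star b * dbar2 F (q + sliceCLM a b x) := by
  have hd : HasFDerivAt (fun h => F (q + sliceCLM a b h))
      ((fderiv ℝ F (q + sliceCLM a b x)).comp (sliceCLM a b)) x :=
    hF.hasFDerivAt.comp x ((sliceCLM a b).hasFDerivAt.const_add q)
  rw [hd.fderiv, fueterCLM_comp_sliceCLM]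
  simp [fueterCLM_apply, dbar1, dbar2, e1, e2]

theorem harmonicOnNhd_comp_add_sliceCLM {F : E → ℍ} {D : Set E} (hDo : IsOpen D)
    (hF : ContDiffOn ℝ 2 F D) (hFh : ∀ p ∈ D, dbar1 F p = 0 ∧ dbar2 F p = 0) (q : E) (a b : ℍ) :
    HarmonicOnNhd (fun h => F (q + sliceCLM a b h)) ((fun h => q + sliceCLM a b h) ⁻¹' D) := by
  refine harmonicOnNhd_of_fueterCLM_fderiv_eq_zero (hDo.preimage (by fun_prop))
    (hF.comp (by fun_prop : ContDiff ℝ 2 fun h => q + sliceCLM a b h).contDiffOn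
      (mapsTo_preimage _ D)) fun x hx => ?_
  rw [fueterCLM_fderiv_comp_add_sliceCLM
    ((hF.contDiffAt (hDo.mem_nhds hx)).differentiableAt two_ne_zero), (hFh _ hx).1, (hFh _ hx).2]
  simp

theorem mapsTo_closure_preimage_union {X Y : Type*} [TopologicalSpace X] [TopologicalSpace Y]
    {g : Y → X} {HS S D W : Set X} (hg : Continuous g) (hgHS : ∀ y, g y ∈ HS) (hWo : IsOpen W)
    (hDW : Disjoint D W) (hDWu : HS \ S = D ∪ W) : MapsTo g (closure (g ⁻¹' D)) (D ∪ S) := by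
  intro y hy
  have hcl : g y ∈ closure D := hg.closure_preimage_subset D hy
  by_contra hDS
  have hmem : g y ∈ HS \ S := ⟨hgHS y, fun hS => hDS (Or.inr hS)⟩
  rw [hDWu] at hmem
  exact hmem.elim (fun hD => hDS (Or.inl hD)) (disjoint_left.1 (hDW.closure_left hWo) hcl)

theorem extension_sup_bound_general
    (L : E →ₗ[ℝ] ℝ) (c : ℝ)
    (HS : Set E) (hHS : HS = {p : E | c < L p})
    (S : Set E)
    (D W : Set E) (hDo : IsOpen D) (hWo : IsOpen W)
    (hDW : Disjoint D W) (hDWu : HS \ S = D ∪ W)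
    (hDbd : Bornology.IsBounded D)
    (f : E → ℍ)
    (hfbd : BddAbove ((fun p => ‖f p‖) '' S))
    (F : E → ℍ) (hF : ContDiffOn ℝ (⊤:ℕ∞) F (D ∪ S))
    (hFh : ∀ q ∈ D, dbar1 F q = 0 ∧ dbar2 F q = 0)
    (hFf : EqOn F f S) :
    ∀ q ∈ D, ‖F q‖ ≤ sSup ((fun p => ‖f p‖) '' S) := by
  intro q hq
  obtain ⟨a, b, hab, hLab⟩ := exists_sliceCLM_ne_zero L
  set ι : ℍ → E := fun h => q + sliceCLM a b h
  have hι : Continuous ι := by fun_prop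
  have hιHS : ∀ h, ι h ∈ HS := fun h => by
    have hqHS : q ∈ HS := (hDWu ▸ Or.inl hq : q ∈ HS \ S).1
    rw [hHS] at hqHS ⊢
    show c < L (q + sliceCLM a b h)
    rwa [map_add, hLab, add_zero]
  have hclos := mapsTo_closure_preimage_union hι hιHS hWo hDW hDWu
  have hbound : ∀ z ∈ frontier (ι ⁻¹' D), ‖F (ι z)‖ ≤ sSup ((fun p => ‖f p‖) '' S) := by
    intro z hz
    have hzS : ι z ∈ S :=
      (hclos (frontier_subset_closure hz)).resolve_left ((hDo.preimage hι).frontier_eq ▸ hz).2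
    rw [hFf hzS]
    exact le_csSup hfbd ⟨_, hzS, rfl⟩
  have hharm := harmonicOnNhd_comp_add_sliceCLM hDo
    ((hF.mono subset_union_left).of_le (WithTop.coe_le_coe.2 le_top)) hFh q a b
  simpa [ι, Prod.mk_zero_zero] using HarmonicOnNhd.norm_le_of_forall_mem_frontier_norm_le
    (isBounded_preimage_add_sliceCLM hab q hDbd) hharm
    (hF.continuousOn.comp hι.continuousOn hclos) hbound
    (subset_closure (show q + sliceCLM a b 0 ∈ D by rwa [map_zero, add_zero]))

/-- Remark appl2, maximum principle for the extension. In
the situation of Theorem appl1, if `|f|` is bounded on `S` then the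
ℍ-holomorphic extension `F` of `f` to `D` satisfies
`|F(q)| ≤ sup_S |f|` for all `q ∈ D`. -/
theorem extension_sup_bound
    (L : E →ₗ[ℝ] ℝ) (hL : L ≠ 0) (c : ℝ)
    (HS : Set E) (hHS : HS = {p : E | c < L p})
    (S : Set E) (hSne : S.Nonempty) (hSsub : S ⊆ HS)
    (hSconn : IsConnected S) (hSclosed : closure S ∩ HS ⊆ S)
    (V : Set E) (hVo : IsOpen V) (hSV : S ⊆ V) (hVHS : V ⊆ HS)
    (ρ : E → ℝ) (hρ : ContDiffOn ℝ (⊤:ℕ∞) ρ V)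
    (hSρ : S = {p ∈ V | ρ p = 0}) (hgrad : ∀ p ∈ S, grad ρ p ≠ 0)
    (D W : Set E) (hDo : IsOpen D) (hWo : IsOpen W)
    (hDconn : IsConnected D) (hWconn : IsConnected W)
    (hDW : Disjoint D W) (hDWu : HS \ S = D ∪ W)
    (hDbd : Bornology.IsBounded D)
    (f : E → ℍ) (hfs : SmoothOnS S f) (hfa : Admissible ρ S f)
    (hfbd : BddAbove ((fun p => ‖f p‖) '' S))
    (F : E → ℍ) (hF : ContDiffOn ℝ (⊤:ℕ∞) F (D ∪ S))
    (hFh : ∀ q ∈ D, dbar1 F q = 0 ∧ dbar2 F q = 0)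
    (hFf : EqOn F f S) :
    ∀ q ∈ D, ‖F q‖ ≤ sSup ((fun p => ‖f p‖) '' S) :=
  extension_sup_bound_general L c HS hHS S D W hDo hWo hDW hDWu hDbd f hfbd F hF hFh hFf
end
end
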